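/- Suppose the kernel functions K_1,…,K_n are singular and J is an arbitrary n-field function. Then the difference function Φ : Y → ℝ^n is proper, i.e., the preimage under Φ of every compact subset of ℝ^n is a compact subset of Y; moreover, for every sequence (x_k) in Y converging to a point of the boundary ∂Y of Y in ℝ^n, one has ‖Φ(x_k)‖ → ∞. -/

import Mathlib

open Set Filter
open scoped BigOperators Topology

noncomputable section

/-- The real part of an extended-real-valued function. -/
def toR (K : ℝ → EReal) : ℝ → ℝ := fun t => (K t).toReal

/-- A *kernel function*: finite-valued, continuous and concave on `[-1,0)` and `(0,1]`,
never `+∞`, and with coinciding one-sided limits at `0` (given by the value `K 0`). -/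
structure IsKernel (K : ℝ → EReal) : Prop where
  ne_top : ∀ t, K t ≠ ⊤
  finite_left : ∀ t ∈ Ico (-1:ℝ) 0, K t ≠ ⊥
  finite_right : ∀ t ∈ Ioc (0:ℝ) 1, K t ≠ ⊥
  cont_left : ContinuousOn (toR K) (Ico (-1:ℝ) 0)
  cont_right : ContinuousOn (toR K) (Ioc (0:ℝ) 1)
  concave_left : ConcaveOn ℝ (Ico (-1:ℝ) 0) (toR K)
  concave_right : ConcaveOn ℝ (Ioc (0:ℝ) 1) (toR K)
  tendsto_left : Tendsto K (nhdsWithin 0 (Iio 0)) (nhds (K 0))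
  tendsto_right : Tendsto K (nhdsWithin 0 (Ioi 0)) (nhds (K 0))

/-- Left one-sided derivative. -/
def Dm (f : ℝ → ℝ) (t : ℝ) : ℝ := derivWithin f (Iio t) t

/-- Right one-sided derivative. -/
def Dp (f : ℝ → ℝ) (t : ℝ) : ℝ := derivWithin f (Ioi t) t

/-- Condition (PM_c): periodized `c`-monotonicity. -/
def PMcond (K : ℝ → EReal) (c : ℝ) : Prop :=
  ∀ t ∈ Ioo (0:ℝ) 1, c ≤ Dm (toR K) t - Dm (toR K) (t - 1)

/-- An *n-field function*: bounded above, never `+∞`, finite at more than `n` points of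
`[0,1]`, where the endpoints count with weight `1/2`. -/
structure IsNField (n : ℕ) (J : ℝ → EReal) : Prop where
  ne_top : ∀ t, J t ≠ ⊤
  bdd : ∃ M : ℝ, ∀ t ∈ Icc (0:ℝ) 1, J t ≤ (M : EReal)
  count : (∃ T : Finset ℝ, ↑T ⊆ {t | t ∈ Ioo (0:ℝ) 1 ∧ J t ≠ ⊥} ∧ n + 1 ≤ T.card) ∨
    ((∃ T : Finset ℝ, ↑T ⊆ {t | t ∈ Ioo (0:ℝ) 1 ∧ J t ≠ ⊥} ∧ n ≤ T.card) ∧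
      (J 0 ≠ ⊥ ∨ J 1 ≠ ⊥))

/-- The open simplex `S`. -/
def openSimplex (n : ℕ) : Set (Fin n → ℝ) :=
  {y | StrictMono y ∧ ∀ i, y i ∈ Ioo (0:ℝ) 1}

/-- The closed simplex `S̄`. -/
def closedSimplex (n : ℕ) : Set (Fin n → ℝ) :=
  {y | Monotone y ∧ ∀ i, y i ∈ Icc (0:ℝ) 1}

/-- The left endpoint `y_j` of `I_j(y)`, with the convention `y_0 = 0`. -/
def nodeLo {n : ℕ} (y : Fin n → ℝ) (j : ℕ) : ℝ :=
  if h : 0 < j ∧ j ≤ n then y ⟨j - 1, by omega⟩ else 0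

/-- The right endpoint `y_{j+1}` of `I_j(y)`, with the convention `y_{n+1} = 1`. -/
def nodeHi {n : ℕ} (y : Fin n → ℝ) (j : ℕ) : ℝ :=
  if h : j < n then y ⟨j, h⟩ else 1

/-- The interval `I_j(y) = [y_j, y_{j+1}]`. -/
def Ij {n : ℕ} (y : Fin n → ℝ) (j : ℕ) : Set ℝ := Icc (nodeLo y j) (nodeHi y j)

/-- The sum of translates function `F(y,t) = J(t) + ∑ K_j(t - y_j)`. -/
def SOT {n : ℕ} (K : Fin n → ℝ → EReal) (J : ℝ → EReal) (y : Fin n → ℝ) (t : ℝ) : EReal :=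
  J t + ∑ i, K i (t - y i)

/-- The interval maximum `m_j(y) = sup_{t ∈ I_j(y)} F(y,t)`. -/
def mj {n : ℕ} (K : Fin n → ℝ → EReal) (J : ℝ → EReal) (y : Fin n → ℝ) (j : ℕ) : EReal :=
  ⨆ t ∈ Ij y j, SOT K J y t

/-- The regularity set `Y`. -/
def regSet {n : ℕ} (K : Fin n → ℝ → EReal) (J : ℝ → EReal) : Set (Fin n → ℝ) :=
  {y ∈ openSimplex n | ∀ j ≤ n, mj K J y j ≠ ⊥}

/-- The difference function `Φ(y) = (m_1 - m_0, …, m_n - m_{n-1})`. -/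
def PhiFun {n : ℕ} (K : Fin n → ℝ → EReal) (J : ℝ → EReal) (y : Fin n → ℝ) : Fin n → ℝ :=
  fun i => (mj K J y ((i : ℕ) + 1)).toReal - (mj K J y (i : ℕ)).toReal

/-- A map between (pseudo)metric spaces is *locally bi-Lipschitz* if every point has a
neighborhood on which the map is a bi-Lipschitz homeomorphism onto its image. -/
def LocallyBiLipschitz {α β : Type*} [PseudoMetricSpace α] [PseudoMetricSpace β]
    (f : α → β) : Prop :=
  ∀ x : α, ∃ U ∈ 𝓝 x, ∃ c C : ℝ, 0 < c ∧ ∀ a ∈ U, ∀ b ∈ U,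
    c * dist a b ≤ dist (f a) (f b) ∧ dist (f a) (f b) ≤ C * dist a b

/-- The relative interior of `[a,b] ⊆ [0,1]` in the space `[0,1]`. -/
def relIntIcc (a b : ℝ) : Set ℝ :=
  (if a = 0 then Ici a else Ioi a) ∩ (if b = 1 then Iic b else Iio b)

/-- Condition `(∞₊)`. -/
def CondInfPlus (J : ℝ → EReal) : Prop :=
  J 0 = ⊥ ∧ Tendsto J (nhdsWithin 0 (Ioi 0)) (nhds ⊥)

/-- Condition `(∞₋)`. -/
def CondInfMinus (J : ℝ → EReal) : Prop :=
  J 1 = ⊥ ∧ Tendsto J (nhdsWithin 1 (Iio 1)) (nhds ⊥)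

/-- Fenton's cusp condition `(∞'₊)`. -/
def CuspPlus (J : ℝ → EReal) : Prop :=
  ∀ M : ℝ, ∃ δ > (0:ℝ), ∀ s t : ℝ, 0 ≤ s → s < t → t ≤ δ →
    J s ≠ ⊥ → J t ≠ ⊥ → M ≤ ((J t).toReal - (J s).toReal) / (t - s)

/-- Fenton's cusp condition `(∞'₋)`. -/
def CuspMinus (J : ℝ → EReal) : Prop :=
  ∀ M : ℝ, ∃ δ > (0:ℝ), ∀ t s : ℝ, 1 - δ ≤ t → t < s → s ≤ 1 →
    J s ≠ ⊥ → J t ≠ ⊥ → ((J t).toReal - (J s).toReal) / (t - s) ≤ -M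

/-- `L : [0,1] → [0,∞)` is log-concave:
`L(λs + (1-λ)t) ≥ L(s)^λ L(t)^{1-λ}`. -/
def LogConcaveOn01 (L : ℝ → ℝ) : Prop :=
  ∀ s ∈ Icc (0:ℝ) 1, ∀ t ∈ Icc (0:ℝ) 1, ∀ l ∈ Icc (0:ℝ) 1,
    L s ^ l * L t ^ (1 - l) ≤ L (l * s + (1 - l) * t)

/-!
Singular kernels make every interval maximum `m_j` a continuous extended-real function of the
nodes on the whole cube `[0,1]^n`: where `F(y,t)` is large, `t` is uniformly far from the nodes,
so moving the nodes a little keeps `t` in its interval and changes the kernel part uniformly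
little. Hence `Y` is open and `Φ` is continuous on `Y`.

Since `J` is finite at more than `n` points, one of them is far from all `n` nodes, so some
`m_j` is bounded below uniformly on the cube; a bound on `‖Φ‖` bounds the increments of
`j ↦ m_j`, hence all `m_j` from below. By continuity such a bound survives limits, and it rules
out degenerate intervals (on which `m_j = -∞`, the kernels being singular at the nodes), so
limits of points of `Y` with bounded `Φ` stay in `Y`. Both claims follow.
-/

theorem EReal.coe_finset_sum {ι : Type*} (s : Finset ι) (f : ι → ℝ) :
    ((∑ i ∈ s, f i : ℝ) : EReal) = ∑ i ∈ s, (f i : EReal) :=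
  map_sum (⟨⟨Real.toEReal, EReal.coe_zero⟩, EReal.coe_add⟩ : ℝ →+ EReal) f s

theorem eventually_nhdsGT_forall_abs_le {P : ℝ → Prop} (h : ∀ᶠ u in 𝓝 0, P u) :
    ∀ᶠ δ in 𝓝[>] 0, ∀ u, |u| ≤ δ → P u := by
  obtain ⟨ε, hε, hP⟩ := Metric.eventually_nhds_iff.1 h
  filter_upwards [Ioo_mem_nhdsGT hε] with δ hδ u hu
  exact hP (by rw [Real.dist_eq, sub_zero]; exact hu.trans_lt hδ.2)

theorem continuousOn_of_forall_le_max_add {X : Type*} [PseudoMetricSpace X] {s : Set X}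
    {f : X → EReal}
    (h : ∀ (B ε : ℝ), 0 < ε → ∃ η > 0, ∀ x ∈ s, ∀ x' ∈ s, dist x x' ≤ η →
      f x ≤ max (B : EReal) (f x' + ε)) :
    ContinuousOn f s := by
  have hmax : ∀ {a : EReal} {b₁ b₂ : ℝ}, b₁ < b₂ → a ≤ b₁ →
      max (b₁ : EReal) (a + (b₂ - b₁ : ℝ)) ≤ b₂ := fun h₁₂ ha =>
    max_le (EReal.coe_le_coe_iff.2 h₁₂.le)
      ((add_le_add_left ha _).trans_eq (by rw [← EReal.coe_add]; ring_nf))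
  intro z hz
  rw [ContinuousWithinAt, tendsto_order]
  refine ⟨fun a ha => ?_, fun a ha => ?_⟩
  · obtain ⟨b₁, hab₁, hb₁⟩ := EReal.lt_iff_exists_real_btwn.1 ha
    obtain ⟨b₂, hb₁₂, hb₂⟩ := EReal.lt_iff_exists_real_btwn.1 hb₁
    have hb : b₁ < b₂ := EReal.coe_lt_coe_iff.1 hb₁₂
    obtain ⟨η, hη, hle⟩ := h b₁ (b₂ - b₁) (sub_pos.2 hb)
    filter_upwards [self_mem_nhdsWithin, nhdsWithin_le_nhds (Metric.closedBall_mem_nhds z hη)]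
      with x hx hxz
    refine hab₁.trans (lt_of_not_ge fun hx₁ => ?_)
    exact hb₂.not_ge ((hle z hz x hx (by rw [dist_comm]; exact hxz)).trans (hmax hb hx₁))
  · obtain ⟨b₂, hzb₂, hb₂⟩ := EReal.lt_iff_exists_real_btwn.1 ha
    obtain ⟨b₁, hzb₁, hb₁₂⟩ := EReal.lt_iff_exists_real_btwn.1 hzb₂
    have hb : b₁ < b₂ := EReal.coe_lt_coe_iff.1 hb₁₂
    obtain ⟨η, hη, hle⟩ := h b₁ (b₂ - b₁) (sub_pos.2 hb)
    filter_upwards [self_mem_nhdsWithin, nhdsWithin_le_nhds (Metric.closedBall_mem_nhds z hη)]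
      with x hx hxz
    exact ((hle x hx z hz hxz).trans (hmax hb hzb₁.le)).trans_lt hb₂

theorem abs_sub_le_mul_of_abs_sub_succ_le {r : ℕ → ℝ} {n : ℕ} {R : ℝ} (hR : 0 ≤ R)
    (h : ∀ k < n, |r (k + 1) - r k| ≤ R) {i j : ℕ} (hi : i ≤ n) (hj : j ≤ n) :
    |r i - r j| ≤ n * R := by
  wlog hij : i ≤ j generalizing i j
  · rw [abs_sub_comm]; exact this hj hi (le_of_not_ge hij)
  calc |r i - r j| ≤ ∑ k ∈ Finset.Ico i j, dist (r k) (r (k + 1)) := dist_le_Ico_sum_dist r hij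
    _ ≤ ∑ _k ∈ Finset.Ico i j, R := Finset.sum_le_sum fun k hk => by
        rw [dist_comm]; exact h k (by simp only [Finset.mem_Ico] at hk; omega)
    _ ≤ n * R := by
        rw [Finset.sum_const, Nat.card_Ico, nsmul_eq_mul]
        exact mul_le_mul_of_nonneg_right (by exact_mod_cast (by omega)) hR

theorem exists_pos_exists_mem_forall_le_abs_sub {ι : Type*} [Fintype ι] (T : Finset ℝ)
    (hT : Fintype.card ι < T.card) : ∃ δ > 0, ∀ y : ι → ℝ, ∃ t ∈ T, ∀ i, δ ≤ |t - y i| := by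
  have hsep : ∀ᶠ δ in 𝓝[>] 0, ∀ a ∈ T, ∀ b ∈ T, a ≠ b → 2 * δ < |a - b| := by
    refine (eventually_all_finset T).2 fun a _ => (eventually_all_finset T).2 fun b _ => ?_
    rcases eq_or_ne a b with rfl | hab
    · exact Eventually.of_forall fun _ h => (h rfl).elim
    · filter_upwards [nhdsWithin_le_nhds (eventually_lt_nhds
        (half_pos (abs_pos.2 (sub_ne_zero.2 hab))))] with δ hδ _
      linarith
  obtain ⟨δ, hsep, hδ⟩ := (hsep.and self_mem_nhdsWithin).exists
  refine ⟨δ, hδ, fun y => ?_⟩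
  by_contra! hnear
  choose f hf using hnear
  obtain ⟨a, b, hab, heq⟩ := Fintype.exists_ne_map_eq_of_card_lt (fun t : T => f t t.2)
    (by simpa using hT)
  have ha := hf a a.2
  have hb := hf b b.2
  rw [show f b b.2 = f a a.2 from heq.symm] at hb
  have := hsep a a.2 b b.2 (Subtype.coe_ne_coe.2 hab)
  have := abs_sub_le (a : ℝ) (y (f a a.2)) b
  rw [abs_sub_comm (y _) (b : ℝ)] at this
  linarith

theorem isCompact_setOf_le_abs (δ : ℝ) : IsCompact {u ∈ Icc (-1 : ℝ) 1 | δ ≤ |u|} :=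
  isCompact_Icc.inter_right (isClosed_le continuous_const continuous_abs)

namespace IsKernel

variable {K : ℝ → EReal}

theorem ne_bot (hK : IsKernel K) {u : ℝ} (hu : u ∈ Icc (-1 : ℝ) 1) (h0 : u ≠ 0) : K u ≠ ⊥ := by
  rcases h0.lt_or_gt with h | h
  exacts [hK.finite_left u ⟨hu.1, h⟩, hK.finite_right u ⟨h, hu.2⟩]

theorem coe_toR (hK : IsKernel K) {u : ℝ} (hu : u ∈ Icc (-1 : ℝ) 1) (h0 : u ≠ 0) :
    (toR K u : EReal) = K u :=
  EReal.coe_toReal (hK.ne_top u) (hK.ne_bot hu h0)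

theorem continuousOn (hK : IsKernel K) : ContinuousOn K (Icc (-1) 1) := by
  have hpiece : ∀ {s : Set ℝ}, s ⊆ Icc (-1) 1 \ {0} → ContinuousOn (toR K) s →
      ContinuousOn K s := fun hs hc =>
    (continuous_coe_real_ereal.comp_continuousOn hc).congr fun u hu =>
      (hK.coe_toR (hs hu).1 (hs hu).2).symm
  have hleft := hpiece (fun u hu => ⟨⟨hu.1, by linarith [hu.2]⟩, hu.2.ne⟩) hK.cont_left
  have hright := hpiece (fun u hu => ⟨⟨by linarith [hu.1], hu.2⟩, hu.1.ne'⟩) hK.cont_right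
  intro t ht
  rcases lt_trichotomy t 0 with h | rfl | h
  · exact (hleft t ⟨ht.1, h⟩).mono_of_mem_nhdsWithin
      (mem_nhdsWithin.2 ⟨Iio 0, isOpen_Iio, h, fun u hu => ⟨hu.2.1, hu.1⟩⟩)
  · exact (continuousAt_iff_continuous_left'_right'.2
      ⟨hK.tendsto_left, hK.tendsto_right⟩).continuousWithinAt
  · exact (hright t ⟨h, ht.2⟩).mono_of_mem_nhdsWithin
      (mem_nhdsWithin.2 ⟨Ioi 0, isOpen_Ioi, h, fun u hu => ⟨hu.1, hu.2.2⟩⟩)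

theorem exists_le_coe (hK : IsKernel K) : ∃ s : ℝ, ∀ u ∈ Icc (-1 : ℝ) 1, K u ≤ s := by
  obtain ⟨t, -, hmax⟩ := isCompact_Icc.exists_isMaxOn (nonempty_Icc.2 (by norm_num)) hK.continuousOn
  exact ⟨(K t).toReal, fun u hu => (hmax hu).trans (EReal.le_coe_toReal (hK.ne_top t))⟩

theorem continuousOn_toR (hK : IsKernel K) {δ : ℝ} (hδ : 0 < δ) :
    ContinuousOn (toR K) {u ∈ Icc (-1 : ℝ) 1 | δ ≤ |u|} :=
  EReal.continuousOn_toReal.comp (hK.continuousOn.mono inter_subset_left) fun u hu => by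
    simp [hK.ne_top u, hK.ne_bot hu.1 (abs_pos.1 (hδ.trans_le hu.2))]

theorem exists_coe_le (hK : IsKernel K) {δ : ℝ} (hδ : 0 < δ) :
    ∃ c : ℝ, ∀ u ∈ Icc (-1 : ℝ) 1, δ ≤ |u| → c ≤ K u := by
  obtain ⟨c, hc⟩ := (isCompact_setOf_le_abs δ).bddBelow_image (hK.continuousOn_toR hδ)
  refine ⟨c, fun u hu hδu => ?_⟩
  rw [← hK.coe_toR hu (abs_pos.1 (hδ.trans_le hδu)), EReal.coe_le_coe_iff]
  exact hc ⟨u, ⟨hu, hδu⟩, rfl⟩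

theorem eventually_le (hK : IsKernel K) (hsing : K 0 = ⊥) (b : ℝ) :
    ∀ᶠ δ in 𝓝[>] 0, ∀ u, |u| ≤ δ → K u ≤ b := by
  have hcont : ContinuousAt K 0 :=
    continuousAt_iff_continuous_left'_right'.2 ⟨hK.tendsto_left, hK.tendsto_right⟩
  rw [ContinuousAt, hsing] at hcont
  exact eventually_nhdsGT_forall_abs_le
    ((hcont.eventually (gt_mem_nhds (EReal.bot_lt_coe b))).mono fun _ h => h.le)

theorem eventually_le_add (hK : IsKernel K) {δ ε : ℝ} (hδ : 0 < δ) (hε : 0 < ε) :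
    ∀ᶠ η in 𝓝[>] 0, ∀ u ∈ Icc (-1 : ℝ) 1, ∀ v ∈ Icc (-1 : ℝ) 1, δ ≤ |u| → |u - v| ≤ η →
      K u ≤ K v + ε := by
  set A := {u ∈ Icc (-1 : ℝ) 1 | δ / 2 ≤ |u|}
  have hA0 : ∀ u ∈ A, u ≠ 0 := fun u hu => abs_pos.1 ((half_pos hδ).trans_le hu.2)
  obtain ⟨η₀, hη₀, hunif⟩ := Metric.uniformContinuousOn_iff.1
    ((isCompact_setOf_le_abs _).uniformContinuousOn_of_continuous
      (hK.continuousOn_toR (half_pos hδ))) ε hε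
  filter_upwards [Ioo_mem_nhdsGT (lt_min hη₀ (half_pos hδ))] with η hη u hu v hv hδu huv
  have hη₁ := hη.2.trans_le (min_le_left _ _)
  have hη₂ := hη.2.trans_le (min_le_right _ _)
  have huA : u ∈ A := ⟨hu, by linarith⟩
  have hvA : v ∈ A := ⟨hv, by linarith [abs_sub_abs_le_abs_sub u v]⟩
  have hclose := hunif u huA v hvA (by rw [Real.dist_eq]; linarith)
  rw [Real.dist_eq] at hclose
  rw [← hK.coe_toR hu (hA0 u huA), ← hK.coe_toR hv (hA0 v hvA), ← EReal.coe_add,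
    EReal.coe_le_coe_iff]
  linarith [le_abs_self (toR K u - toR K v)]

end IsKernel

theorem sub_mem_Icc_neg_one_one {ι : Type*} {y : ι → ℝ} (hy : y ∈ Icc 0 1) {t : ℝ}
    (ht : t ∈ Icc (0 : ℝ) 1) (i : ι) : t - y i ∈ Icc (-1 : ℝ) 1 := by
  have h₀ : 0 ≤ y i := hy.1 i
  have h₁ : y i ≤ 1 := hy.2 i
  exact ⟨by linarith [ht.1], by linarith [ht.2]⟩

section KernelSum

variable {ι : Type*} [Fintype ι] {K : ι → ℝ → EReal}

def kernelSum (K : ι → ℝ → EReal) (y : ι → ℝ) (t : ℝ) : EReal :=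
  ∑ i, K i (t - y i)

theorem kernelSum_self_eq_bot (hsing : ∀ i, K i 0 = ⊥) (y : ι → ℝ) (i : ι) :
    kernelSum K y (y i) = ⊥ := by
  classical
  rw [kernelSum, ← Finset.add_sum_erase _ _ (Finset.mem_univ i), sub_self, hsing, EReal.bot_add]

theorem exists_kernelSum_le (hK : ∀ i, IsKernel (K i)) :
    ∃ s : ℝ, ∀ y ∈ Icc (0 : ι → ℝ) 1, ∀ t ∈ Icc (0 : ℝ) 1, kernelSum K y t ≤ s := by
  choose s hs using fun i => (hK i).exists_le_coe
  refine ⟨∑ i, s i, fun y hy t ht => ?_⟩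
  rw [EReal.coe_finset_sum]
  exact Finset.sum_le_sum fun i _ => hs i _ (sub_mem_Icc_neg_one_one hy ht i)

theorem exists_coe_le_kernelSum (hK : ∀ i, IsKernel (K i)) {δ : ℝ} (hδ : 0 < δ) :
    ∃ c : ℝ, ∀ y ∈ Icc (0 : ι → ℝ) 1, ∀ t ∈ Icc (0 : ℝ) 1, (∀ i, δ ≤ |t - y i|) →
      c ≤ kernelSum K y t := by
  choose c hc using fun i => (hK i).exists_coe_le hδ
  refine ⟨∑ i, c i, fun y hy t ht hfar => ?_⟩
  rw [EReal.coe_finset_sum]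
  exact Finset.sum_le_sum fun i _ => hc i _ (sub_mem_Icc_neg_one_one hy ht i) (hfar i)

theorem eventually_kernelSum_le (hK : ∀ i, IsKernel (K i)) (hsing : ∀ i, K i 0 = ⊥) (b : ℝ) :
    ∀ᶠ δ in 𝓝[>] 0, ∀ y ∈ Icc (0 : ι → ℝ) 1, ∀ t ∈ Icc (0 : ℝ) 1, ∀ i, |t - y i| ≤ δ →
      kernelSum K y t ≤ b := by
  classical
  choose s hs using fun i => (hK i).exists_le_coe
  -- the other kernels contribute at most `∑ s - s i`, so `K i` has to push the sum below `b`
  filter_upwards [eventually_all.2 fun i =>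
    (hK i).eventually_le (hsing i) (b - (∑ k, s k - s i))] with δ hδ y hy t ht i hi
  have hrest : ∑ k ∈ Finset.univ.erase i, K k (t - y k) ≤ ((∑ k, s k - s i : ℝ) : EReal) := by
    rw [← Finset.sum_erase_eq_sub (Finset.mem_univ i), EReal.coe_finset_sum]
    exact Finset.sum_le_sum fun k _ => hs k _ (sub_mem_Icc_neg_one_one hy ht k)
  calc kernelSum K y t = K i (t - y i) + ∑ k ∈ Finset.univ.erase i, K k (t - y k) :=
        (Finset.add_sum_erase _ _ (Finset.mem_univ i)).symm
    _ ≤ ((b - (∑ k, s k - s i) : ℝ) : EReal) + ((∑ k, s k - s i : ℝ) : EReal) :=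
        add_le_add (hδ i _ hi) hrest
    _ = b := by rw [← EReal.coe_add, sub_add_cancel]

theorem eventually_kernelSum_le_add (hK : ∀ i, IsKernel (K i)) {δ ε : ℝ} (hδ : 0 < δ)
    (hε : 0 < ε) :
    ∀ᶠ η in 𝓝[>] 0, ∀ y ∈ Icc (0 : ι → ℝ) 1, ∀ y' ∈ Icc (0 : ι → ℝ) 1, ∀ t ∈ Icc (0 : ℝ) 1,
      (∀ i, δ ≤ |t - y i|) → dist y y' ≤ η → kernelSum K y t ≤ kernelSum K y' t + ε := by
  set N := Fintype.card ι
  have hε' : 0 < ε / (N + 1) := by positivity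
  filter_upwards [eventually_all.2 fun i => (hK i).eventually_le_add hδ hε'] with
    η hη y hy y' hy' t ht hfar hyy'
  have hterm : ∀ i, K i (t - y i) ≤ K i (t - y' i) + (ε / (N + 1) : ℝ) := fun i =>
    hη i _ (sub_mem_Icc_neg_one_one hy ht i) _ (sub_mem_Icc_neg_one_one hy' ht i) (hfar i) <| by
      rw [sub_sub_sub_cancel_left, ← Real.dist_eq, dist_comm]
      exact (dist_le_pi_dist y y' i).trans hyy'
  calc kernelSum K y t ≤ ∑ i, (K i (t - y' i) + (ε / (N + 1) : ℝ)) :=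
        Finset.sum_le_sum fun i _ => hterm i
    _ = kernelSum K y' t + ((N • (ε / (N + 1)) : ℝ) : EReal) := by
        rw [Finset.sum_add_distrib, Finset.sum_const, Finset.card_univ, EReal.coe_nsmul]; rfl
    _ ≤ kernelSum K y' t + ε := by
        gcongr
        rw [nsmul_eq_mul, mul_div_assoc', div_le_iff₀ (by positivity)]
        nlinarith

end KernelSum

section Nodes

variable {n : ℕ}

theorem Ij_subset_Icc {y : Fin n → ℝ} (hy : y ∈ Icc 0 1) (j : ℕ) : Ij y j ⊆ Icc 0 1 := by
  have hlo : 0 ≤ nodeLo y j := by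
    unfold nodeLo; split
    exacts [hy.1 _, le_rfl]
  have hhi : nodeHi y j ≤ 1 := by
    unfold nodeHi; split
    exacts [hy.2 _, le_rfl]
  exact Icc_subset_Icc hlo hhi

theorem exists_mem_Ij (y : Fin n → ℝ) {t : ℝ} (ht : t ∈ Icc (0 : ℝ) 1) :
    ∃ j ≤ n, t ∈ Ij y j := by
  classical
  set P : ℕ → Prop := fun j => nodeLo y j ≤ t
  have hP0 : P 0 := by simpa [P, nodeLo] using ht.1
  refine ⟨Nat.findGreatest P n, Nat.findGreatest_le n,
    Nat.findGreatest_spec (Nat.zero_le n) hP0, ?_⟩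
  by_cases hlt : Nat.findGreatest P n < n
  · have hnext : ¬ P (Nat.findGreatest P n + 1) :=
      Nat.findGreatest_is_greatest (Nat.lt_succ_self _) hlt
    simp only [P, nodeLo, Nat.add_sub_cancel] at hnext
    rw [dif_pos ⟨Nat.succ_pos _, hlt⟩, not_le] at hnext
    rw [nodeHi, dif_pos hlt]
    exact hnext.le
  · rw [nodeHi, dif_neg hlt]
    exact ht.2

theorem mem_Ij_of_lt_abs_sub {y y' : Fin n → ℝ} {t η : ℝ} {j : ℕ} (ht : t ∈ Ij y j)
    (hfar : ∀ i, η < |t - y i|) (hyy' : dist y y' ≤ η) : t ∈ Ij y' j := by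
  have hclose : ∀ i, |y i - y' i| ≤ η := fun i =>
    (Real.dist_eq _ _ ▸ dist_le_pi_dist y y' i).trans hyy'
  obtain ⟨hlo, hhi⟩ := ht
  constructor
  · unfold nodeLo at hlo ⊢
    split_ifs at hlo ⊢ with h
    · have h₁ := hfar ⟨j - 1, by omega⟩
      rw [abs_of_nonneg (sub_nonneg.2 hlo)] at h₁
      linarith [(abs_le.1 (hclose ⟨j - 1, by omega⟩)).1]
    · exact hlo
  · unfold nodeHi at hhi ⊢
    split_ifs at hhi ⊢ with h
    · have h₁ := hfar ⟨j, h⟩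
      rw [abs_of_nonpos (sub_nonpos.2 hhi)] at h₁
      linarith [(abs_le.1 (hclose ⟨j, h⟩)).2]
    · exact hhi

theorem exists_eq_of_mem_Ij_of_nodeHi_le_nodeLo {y : Fin n → ℝ} {j : ℕ}
    (hdeg : nodeHi y j ≤ nodeLo y j) {t : ℝ} (ht : t ∈ Ij y j) : ∃ i, t = y i := by
  have htlo : t = nodeLo y j := le_antisymm (ht.2.trans hdeg) ht.1
  have hthi : t = nodeHi y j := le_antisymm ht.2 (hdeg.trans ht.1)
  unfold nodeLo at htlo
  split_ifs at htlo with h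
  · exact ⟨_, htlo⟩
  unfold nodeHi at hthi
  split_ifs at hthi with h'
  · exact ⟨_, hthi⟩
  · linarith

theorem mem_openSimplex_of_nodeLo_lt_nodeHi {y : Fin n → ℝ}
    (h : ∀ j ≤ n, nodeLo y j < nodeHi y j) : y ∈ openSimplex n := by
  obtain _ | m := n
  · exact ⟨fun a => a.elim0, fun a => a.elim0⟩
  have hmono : StrictMono y := Fin.strictMono_iff_lt_succ.2 fun i => by
    have := h (i + 1) (by omega)
    rwa [nodeLo, dif_pos (by omega), nodeHi, dif_pos (by omega)] at this
  have h₀ : 0 < y 0 := by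
    have := h 0 (by omega)
    rwa [nodeLo, dif_neg (by omega), nodeHi, dif_pos (by omega)] at this
  have h₁ : y (Fin.last m) < 1 := by
    have := h (m + 1) le_rfl
    rwa [nodeLo, dif_pos (by omega), nodeHi, dif_neg (by omega)] at this
  exact ⟨hmono, fun i => ⟨h₀.trans_le (hmono.monotone (Fin.zero_le i)),
    (hmono.monotone (Fin.le_last i)).trans_lt h₁⟩⟩

theorem isOpen_openSimplex : IsOpen (openSimplex n) := by
  simp only [openSimplex, StrictMono, ofPred_and, ofPred_forall]
  exact (isOpen_iInter_of_finite fun a => isOpen_iInter_of_finite fun b =>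
    isOpen_iInter_of_finite fun _ => isOpen_lt (continuous_apply a) (continuous_apply b)).inter
    (isOpen_iInter_of_finite fun i => isOpen_Ioo.preimage (continuous_apply i))

theorem openSimplex_subset_Icc : openSimplex n ⊆ Icc 0 1 :=
  fun _ hy => ⟨fun i => (hy.2 i).1.le, fun i => (hy.2 i).2.le⟩

end Nodes

section IntervalMaxima

variable {n : ℕ} {K : Fin n → ℝ → EReal} {J : ℝ → EReal}

theorem SOT_eq_add_kernelSum (y : Fin n → ℝ) (t : ℝ) : SOT K J y t = J t + kernelSum K y t :=
  rfl

theorem exists_mj_le (hK : ∀ i, IsKernel (K i)) {M : ℝ} (hM : ∀ t ∈ Icc (0 : ℝ) 1, J t ≤ M) :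
    ∃ C : ℝ, ∀ y ∈ Icc (0 : Fin n → ℝ) 1, ∀ j, mj K J y j ≤ C := by
  obtain ⟨s, hs⟩ := exists_kernelSum_le hK
  refine ⟨M + s, fun y hy j => iSup₂_le fun t ht => ?_⟩
  have ht01 := Ij_subset_Icc hy j ht
  rw [SOT_eq_add_kernelSum, EReal.coe_add]
  exact add_le_add (hM t ht01) (hs y hy t ht01)

theorem mj_ne_top (hK : ∀ i, IsKernel (K i)) {M : ℝ} (hM : ∀ t ∈ Icc (0 : ℝ) 1, J t ≤ M)
    {y : Fin n → ℝ} (hy : y ∈ Icc 0 1) (j : ℕ) : mj K J y j ≠ ⊤ := by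
  obtain ⟨C, hC⟩ := exists_mj_le hK hM
  exact ne_top_of_le_ne_top (EReal.coe_ne_top C) (hC y hy j)

theorem exists_pos_lt_abs_sub_of_lt_SOT (hK : ∀ i, IsKernel (K i)) (hsing : ∀ i, K i 0 = ⊥)
    {M : ℝ} (hM : ∀ t ∈ Icc (0 : ℝ) 1, J t ≤ M) (B : ℝ) :
    ∃ δ > 0, ∀ y ∈ Icc (0 : Fin n → ℝ) 1, ∀ t ∈ Icc (0 : ℝ) 1, (B : EReal) < SOT K J y t →
      ∀ i, δ < |t - y i| := by
  obtain ⟨δ, hδ, hδ0⟩ := ((eventually_kernelSum_le hK hsing (B - M)).and self_mem_nhdsWithin).exists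
  refine ⟨δ, hδ0, fun y hy t ht hB i => lt_of_not_ge fun hi => hB.not_ge ?_⟩
  calc SOT K J y t = J t + kernelSum K y t := SOT_eq_add_kernelSum y t
    _ ≤ (M : EReal) + ((B - M : ℝ) : EReal) := add_le_add (hM t ht) (hδ y hy t ht i hi)
    _ = B := by rw [← EReal.coe_add, add_sub_cancel]

theorem exists_mj_le_max_add (hK : ∀ i, IsKernel (K i)) (hsing : ∀ i, K i 0 = ⊥) {M : ℝ}
    (hM : ∀ t ∈ Icc (0 : ℝ) 1, J t ≤ M) (B : ℝ) {ε : ℝ} (hε : 0 < ε) :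
    ∃ η > 0, ∀ y ∈ Icc (0 : Fin n → ℝ) 1, ∀ y' ∈ Icc (0 : Fin n → ℝ) 1, dist y y' ≤ η →
      ∀ j, mj K J y j ≤ max (B : EReal) (mj K J y' j + ε) := by
  obtain ⟨δ, hδ, hfar⟩ := exists_pos_lt_abs_sub_of_lt_SOT hK hsing hM B
  obtain ⟨η, hη, hηδ⟩ := ((eventually_kernelSum_le_add hK hδ hε).and (Ioo_mem_nhdsGT hδ)).exists
  refine ⟨η, hηδ.1, fun y hy y' hy' hyy' j => iSup₂_le fun t ht => ?_⟩
  rcases le_or_gt (SOT K J y t) B with hle | hlt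
  · exact le_max_of_le_left hle
  have ht01 := Ij_subset_Icc hy j ht
  have hfar' := hfar y hy t ht01 hlt
  have ht' : t ∈ Ij y' j := mem_Ij_of_lt_abs_sub ht (fun i => hηδ.2.trans (hfar' i)) hyy'
  refine le_max_of_le_right ?_
  calc SOT K J y t = J t + kernelSum K y t := SOT_eq_add_kernelSum y t
    _ ≤ J t + (kernelSum K y' t + ε) :=
        add_le_add le_rfl (hη y hy y' hy' t ht01 (fun i => (hfar' i).le) hyy')
    _ = SOT K J y' t + ε := by rw [SOT_eq_add_kernelSum, add_assoc]
    _ ≤ mj K J y' j + ε := add_le_add (le_iSup₂_of_le t ht' le_rfl) le_rfl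

theorem continuousOn_mj (hK : ∀ i, IsKernel (K i)) (hsing : ∀ i, K i 0 = ⊥) {M : ℝ}
    (hM : ∀ t ∈ Icc (0 : ℝ) 1, J t ≤ M) (j : ℕ) :
    ContinuousOn (fun y => mj K J y j) (Icc 0 1) :=
  continuousOn_of_forall_le_max_add fun B _ hε =>
    (exists_mj_le_max_add hK hsing hM B hε).imp fun _ ⟨hη, h⟩ =>
      ⟨hη, fun y hy y' hy' hyy' => h y hy y' hy' hyy' j⟩

theorem mem_openSimplex_of_forall_mj_ne_bot (hsing : ∀ i, K i 0 = ⊥) {y : Fin n → ℝ}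
    (h : ∀ j ≤ n, mj K J y j ≠ ⊥) : y ∈ openSimplex n := by
  refine mem_openSimplex_of_nodeLo_lt_nodeHi fun j hj => lt_of_not_ge fun hdeg => h j hj ?_
  refine le_bot_iff.1 (iSup₂_le fun t ht => ?_)
  obtain ⟨i, rfl⟩ := exists_eq_of_mem_Ij_of_nodeHi_le_nodeLo hdeg ht
  rw [SOT_eq_add_kernelSum, kernelSum_self_eq_bot hsing, EReal.add_bot]

theorem regSet_subset_Icc : regSet K J ⊆ Icc 0 1 := fun _ hy => openSimplex_subset_Icc hy.1

theorem isOpen_regSet (hK : ∀ i, IsKernel (K i)) (hsing : ∀ i, K i 0 = ⊥) {M : ℝ}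
    (hM : ∀ t ∈ Icc (0 : ℝ) 1, J t ≤ M) : IsOpen (regSet K J) := by
  refine isOpen_iff_mem_nhds.2 fun y hy => ?_
  have hS : openSimplex n ∈ 𝓝 y := isOpen_openSimplex.mem_nhds hy.1
  have hcont : ∀ j, ContinuousAt (fun y => mj K J y j) y := fun j =>
    (continuousOn_mj hK hsing hM j).continuousAt (mem_of_superset hS openSimplex_subset_Icc)
  have hne : ∀ᶠ y' in 𝓝 y, ∀ j ∈ Iic n, mj K J y' j ≠ ⊥ :=
    (finite_Iic n).eventually_all.2 fun j hj => (hcont j).eventually_ne (hy.2 j hj)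
  filter_upwards [hS, hne] with y' hy'S hy'
  exact ⟨hy'S, hy'⟩

theorem continuousOn_PhiFun (hK : ∀ i, IsKernel (K i)) (hsing : ∀ i, K i 0 = ⊥) {M : ℝ}
    (hM : ∀ t ∈ Icc (0 : ℝ) 1, J t ≤ M) : ContinuousOn (PhiFun K J) (regSet K J) := by
  have hreal : ∀ j ≤ n, ContinuousOn (fun y => (mj K J y j).toReal) (regSet K J) := fun j hj =>
    EReal.continuousOn_toReal.comp ((continuousOn_mj hK hsing hM j).mono regSet_subset_Icc)
      fun y hy => by simp [hy.2 j hj, mj_ne_top hK hM (regSet_subset_Icc hy) j]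
  exact continuousOn_pi.2 fun i => (hreal _ i.isLt).sub (hreal _ i.isLt.le)

end IntervalMaxima

theorem IsNField.exists_finset {n : ℕ} {J : ℝ → EReal} (hJ : IsNField n J) :
    ∃ T : Finset ℝ, ↑T ⊆ {t | t ∈ Icc (0 : ℝ) 1 ∧ J t ≠ ⊥} ∧ n < T.card := by
  classical
  have hIoo : {t | t ∈ Ioo (0 : ℝ) 1 ∧ J t ≠ ⊥} ⊆ {t | t ∈ Icc (0 : ℝ) 1 ∧ J t ≠ ⊥} :=
    fun t ht => ⟨Ioo_subset_Icc_self ht.1, ht.2⟩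
  rcases hJ.count with ⟨T, hT, hcard⟩ | ⟨⟨T, hT, hcard⟩, hend⟩
  · exact ⟨T, hT.trans hIoo, hcard⟩
  obtain ⟨e, he, hJe⟩ : ∃ e ∈ ({0, 1} : Set ℝ), J e ≠ ⊥ :=
    hend.elim (⟨0, by simp, ·⟩) (⟨1, by simp, ·⟩)
  have heT : e ∉ T := fun h => by
    have := (hT h).1
    rcases he with rfl | rfl <;> simp at this
  refine ⟨insert e T, ?_, by rw [Finset.card_insert_of_notMem heT]; omega⟩
  rw [Finset.coe_insert]
  exact insert_subset ⟨by rcases he with rfl | rfl <;> simp, hJe⟩ (hT.trans hIoo)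

section LowerBounds

variable {n : ℕ} {K : Fin n → ℝ → EReal} {J : ℝ → EReal}

theorem exists_coe_le_mj (hK : ∀ i, IsKernel (K i)) (hJ : IsNField n J) :
    ∃ c : ℝ, ∀ y ∈ Icc (0 : Fin n → ℝ) 1, ∃ j ≤ n, (c : EReal) ≤ mj K J y j := by
  obtain ⟨T, hT, hcard⟩ := hJ.exists_finset
  obtain ⟨δ, hδ, hfar⟩ := exists_pos_exists_mem_forall_le_abs_sub (ι := Fin n) T (by simpa)
  obtain ⟨a, ha⟩ := (T.image fun t => (J t).toReal).bddBelow
  obtain ⟨b, hb⟩ := exists_coe_le_kernelSum hK hδ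
  refine ⟨a + b, fun y hy => ?_⟩
  obtain ⟨t, htT, ht⟩ := hfar y
  obtain ⟨ht01, hJt⟩ := hT htT
  have haJ : (a : EReal) ≤ J t :=
    (EReal.coe_le_coe_iff.2 (ha (Finset.mem_image_of_mem _ htT))).trans (EReal.coe_toReal_le hJt)
  obtain ⟨j, hj, htj⟩ := exists_mem_Ij y ht01
  refine ⟨j, hj, le_iSup₂_of_le t htj ?_⟩
  rw [SOT_eq_add_kernelSum, EReal.coe_add]
  exact add_le_add haJ (hb y hy t ht01 ht)

theorem exists_coe_le_mj_of_norm_PhiFun_le (hK : ∀ i, IsKernel (K i)) (hJ : IsNField n J)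
    (R : ℝ) :
    ∃ B : ℝ, ∀ y ∈ regSet K J, ‖PhiFun K J y‖ ≤ R → ∀ j ≤ n, (B : EReal) ≤ mj K J y j := by
  obtain ⟨M, hM⟩ := hJ.bdd
  obtain ⟨c, hc⟩ := exists_coe_le_mj hK hJ
  refine ⟨c - n * R, fun y hy hR j hj => ?_⟩
  have hy01 := regSet_subset_Icc hy
  have hcoe : ∀ j ≤ n, ((mj K J y j).toReal : EReal) = mj K J y j := fun j hj =>
    EReal.coe_toReal (mj_ne_top hK hM hy01 j) (hy.2 j hj)
  obtain ⟨j₀, hj₀, hcj₀⟩ := hc y hy01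
  rw [← hcoe j₀ hj₀, EReal.coe_le_coe_iff] at hcj₀
  have hstep : ∀ k < n, |(mj K J y (k + 1)).toReal - (mj K J y k).toReal| ≤ R := fun k hk =>
    (norm_le_pi_norm (PhiFun K J y) ⟨k, hk⟩).trans hR
  have hspread := abs_sub_le_mul_of_abs_sub_succ_le (r := fun k => (mj K J y k).toReal)
    ((norm_nonneg _).trans hR) hstep hj hj₀
  rw [← hcoe j hj, EReal.coe_le_coe_iff]
  linarith [(abs_le.1 hspread).1]

theorem isClosed_setOf_forall_coe_le_mj (hK : ∀ i, IsKernel (K i)) (hsing : ∀ i, K i 0 = ⊥)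
    {M : ℝ} (hM : ∀ t ∈ Icc (0 : ℝ) 1, J t ≤ M) (B : ℝ) :
    IsClosed {y | y ∈ Icc (0 : Fin n → ℝ) 1 ∧ ∀ j ≤ n, (B : EReal) ≤ mj K J y j} := by
  refine isClosed_of_closure_subset fun y hy => ⟨?_, fun j hj => ?_⟩
  · exact closure_minimal (fun _ h => h.1) isClosed_Icc hy
  · have hsub : {y | y ∈ Icc (0 : Fin n → ℝ) 1 ∧ ∀ j ≤ n, (B : EReal) ≤ mj K J y j} ⊆
        Icc 0 1 ∩ (fun y => mj K J y j) ⁻¹' Ici (B : EReal) := fun _ h => ⟨h.1, h.2 j hj⟩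
    exact (closure_minimal hsub ((continuousOn_mj hK hsing hM j).preimage_isClosed_of_isClosed
      isClosed_Icc isClosed_Ici) hy).2

theorem closure_setOf_norm_PhiFun_le_subset (hK : ∀ i, IsKernel (K i)) (hsing : ∀ i, K i 0 = ⊥)
    (hJ : IsNField n J) (R : ℝ) :
    closure {y ∈ regSet K J | ‖PhiFun K J y‖ ≤ R} ⊆ regSet K J := by
  obtain ⟨M, hM⟩ := hJ.bdd
  obtain ⟨B, hB⟩ := exists_coe_le_mj_of_norm_PhiFun_le hK hJ R
  have hne : ∀ {y}, (∀ j ≤ n, (B : EReal) ≤ mj K J y j) → ∀ j ≤ n, mj K J y j ≠ ⊥ :=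
    fun h j hj => ne_bot_of_le_ne_bot (EReal.coe_ne_bot B) (h j hj)
  have hsub : {y ∈ regSet K J | ‖PhiFun K J y‖ ≤ R} ⊆
      {y | y ∈ Icc (0 : Fin n → ℝ) 1 ∧ ∀ j ≤ n, (B : EReal) ≤ mj K J y j} :=
    fun y hy => ⟨regSet_subset_Icc hy.1, hB y hy.1 hy.2⟩
  refine (closure_minimal hsub (isClosed_setOf_forall_coe_le_mj hK hsing hM B)).trans
    fun y hy => ⟨mem_openSimplex_of_forall_mj_ne_bot hsing (hne hy.2), hne hy.2⟩

end LowerBounds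

theorem difference_function_proper_general
    {n : ℕ} (K : Fin n → ℝ → EReal) (J : ℝ → EReal)
    (hK : ∀ i, IsKernel (K i)) (hsing : ∀ i, K i 0 = ⊥) (hJ : IsNField n J) :
    (∀ Q : Set (Fin n → ℝ), IsCompact Q →
        IsCompact {y ∈ regSet K J | PhiFun K J y ∈ Q}) ∧
    (∀ (x : ℕ → Fin n → ℝ) (y : Fin n → ℝ),
        (∀ k, x k ∈ regSet K J) → y ∈ frontier (regSet K J) →
        Tendsto x atTop (𝓝 y) →
        Tendsto (fun k => ‖PhiFun K J (x k)‖) atTop atTop) := by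
  obtain ⟨M, hM⟩ := hJ.bdd
  refine ⟨fun Q hQ => ?_, fun x y hx hy hlim => ?_⟩
  · obtain ⟨R, hR⟩ := hQ.isBounded.exists_norm_le
    set A := {y ∈ regSet K J | PhiFun K J y ∈ Q}
    have hclosed : IsClosed A := by
      refine isClosed_of_closure_subset fun z hz => ?_
      have hsub : A ⊆ {y ∈ regSet K J | ‖PhiFun K J y‖ ≤ R} := fun y hy => ⟨hy.1, hR _ hy.2⟩
      have hzY : z ∈ regSet K J :=
        closure_setOf_norm_PhiFun_le_subset hK hsing hJ R (closure_mono hsub hz)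
      exact ⟨hzY, hQ.isClosed.closure_subset
        ((continuousOn_PhiFun hK hsing hM z hzY).mono (sep_subset _ _) |>.mem_closure hz
          fun _ hy => hy.2)⟩
    exact isCompact_Icc.of_isClosed_subset hclosed fun y hy => regSet_subset_Icc hy.1
  · rw [(isOpen_regSet hK hsing hM).frontier_eq] at hy
    refine tendsto_atTop.2 fun R => not_not.1 fun hfreq => hy.2 ?_
    exact closure_setOf_norm_PhiFun_le_subset hK hsing hJ R
      (mem_closure_of_frequently_of_tendsto
        ((not_eventually.1 hfreq).mono fun k hk => ⟨hx k, (not_le.1 hk).le⟩) hlim)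

/-- (Proposition 4.2 / `prop:proper`.) For singular kernels and an
arbitrary `n`-field function, the difference function `Φ : Y → ℝ^n` is proper, and
`‖Φ(x_k)‖ → ∞` along any sequence in `Y` converging to a boundary point of `Y`. -/
theorem difference_function_proper
    {n : ℕ} (hn : 1 ≤ n) (K : Fin n → ℝ → EReal) (J : ℝ → EReal)
    (hK : ∀ i, IsKernel (K i)) (hsing : ∀ i, K i 0 = ⊥) (hJ : IsNField n J) :
    (∀ Q : Set (Fin n → ℝ), IsCompact Q →
        IsCompact {y ∈ regSet K J | PhiFun K J y ∈ Q}) ∧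
    (∀ (x : ℕ → Fin n → ℝ) (y : Fin n → ℝ),
        (∀ k, x k ∈ regSet K J) → y ∈ frontier (regSet K J) →
        Tendsto x atTop (𝓝 y) →
        Tendsto (fun k => ‖PhiFun K J (x k)‖) atTop atTop) :=
  difference_function_proper_general K J hK hsing hJ

end
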